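/- For a positive integer n, the identity ∑_{ρ ∈ OP_n} (-2)^{ℓ(ρ)} / z_ρ(t) = 2(t-1)·(t^n - (-1)^n)/(t+1) holds in the field ℚ(t), where the sum is over partitions ρ of n into odd parts, z_ρ(t) = z_ρ / ∏_{i}(1 - t^{ρ_i}), and z_ρ = ∏_i i^{m_i} m_i!. -/

import Mathlib

open Finset

/-- `z_ρ = ∏_i i^{m_i(ρ)} m_i(ρ)!` for a partition `ρ`. -/
def zPartition {n : ℕ} (ρ : Nat.Partition n) : ℕ :=
  ∏ i ∈ ρ.parts.toFinset, i ^ ρ.parts.count i * (ρ.parts.count i).factorial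

open Polynomial in
instance : CharZero (RatFunc ℚ) := by
  constructor
  intro a b h
  have h2 : (algebraMap ℚ[X] (RatFunc ℚ)) (a : ℚ[X]) = (algebraMap ℚ[X] (RatFunc ℚ)) (b : ℚ[X]) := by
    simpa using h
  exact_mod_cast RatFunc.algebraMap_injective ℚ h2


-- z multiplicativity on multisets
def zMul (s : Multiset ℕ) : ℕ :=
  ∏ i ∈ s.toFinset, i ^ s.count i * (s.count i).factorial

lemma zMul_cons (m : ℕ) (s : Multiset ℕ) :
    zMul (m ::ₘ s) = m * (s.count m + 1) * zMul s := by
  classical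
  set c := s.count m with hc
  have hP : ∀ i ∈ s.toFinset.erase m,
      i ^ (m ::ₘ s).count i * ((m ::ₘ s).count i).factorial
        = i ^ s.count i * (s.count i).factorial := by
    intro i hi
    rw [Multiset.count_cons_of_ne (Finset.ne_of_mem_erase hi) ]
  have h1 : zMul (m ::ₘ s)
      = m ^ (c+1) * (c+1).factorial *
        ∏ i ∈ s.toFinset.erase m, i ^ s.count i * (s.count i).factorial := by
    rw [zMul, Multiset.toFinset_cons,
      ← Finset.mul_prod_erase _ _ (Finset.mem_insert_self m s.toFinset),
      Finset.erase_insert_eq_erase, Multiset.count_cons_self,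
      Finset.prod_congr rfl hP]
  have h2 : zMul s = m ^ c * c.factorial *
      ∏ i ∈ s.toFinset.erase m, i ^ s.count i * (s.count i).factorial := by
    by_cases hm : m ∈ s.toFinset
    · rw [zMul, ← Finset.mul_prod_erase _ _ hm]
    · have hc0 : c = 0 := by
        simp only [hc]
        exact Multiset.count_eq_zero_of_notMem (by simpa using hm)
      rw [zMul, Finset.erase_eq_of_notMem hm, hc0]
      simp
  rw [h1, h2, Nat.factorial_succ, pow_succ]
  ring

lemma zMul_pos {s : Multiset ℕ} (hs : ∀ i ∈ s, 0 < i) : 0 < zMul s := by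
  apply Finset.prod_pos
  intro i hi
  exact Nat.mul_pos (Nat.pow_pos (hs i (Multiset.mem_toFinset.mp hi)))
    (Nat.factorial_pos _)

noncomputable def W {n : ℕ} (ρ : Nat.Partition n) : RatFunc ℚ :=
  (-2 : RatFunc ℚ) ^ (Multiset.card ρ.parts) *
    (ρ.parts.map fun j => 1 - (RatFunc.X : RatFunc ℚ) ^ j).prod / (zMul ρ.parts : RatFunc ℚ)

lemma weight_rel {n k m : ℕ} (hm : 0 < m) (σ : Nat.Partition k) (ρ : Nat.Partition n)
    (h : ρ.parts = m ::ₘ σ.parts) :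
    ((m * ρ.parts.count m : ℕ) : RatFunc ℚ) * W ρ
      = 2 * ((RatFunc.X : RatFunc ℚ) ^ m - 1) * W σ := by
  have hzσ : ((zMul σ.parts : ℕ) : RatFunc ℚ) ≠ 0 :=
    Nat.cast_ne_zero.mpr (zMul_pos (fun i hi => σ.parts_pos hi)).ne'
  have hmF : ((m : ℕ) : RatFunc ℚ) ≠ 0 := Nat.cast_ne_zero.mpr hm.ne'
  have hcF : ((σ.parts.count m + 1 : ℕ) : RatFunc ℚ) ≠ 0 :=
    Nat.cast_ne_zero.mpr (Nat.succ_ne_zero _)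
  rw [W, W, h, zMul_cons, Multiset.count_cons_self, Multiset.card_cons,
    Multiset.map_cons, Multiset.prod_cons]
  push_cast
  push_cast at hcF
  rw [pow_succ]
  field_simp
  ring

noncomputable def A (n : ℕ) : RatFunc ℚ := ∑ ρ ∈ Nat.Partition.odds n, W ρ

lemma mem_odds_iff {n : ℕ} {ρ : Nat.Partition n} :
    ρ ∈ Nat.Partition.odds n ↔ ∀ i ∈ ρ.parts, Odd i := by
  rw [Nat.Partition.odds, Nat.Partition.restricted, Finset.mem_filter]
  simp only [Finset.mem_univ, true_and, Nat.not_even_iff_odd]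

def erasePart {n : ℕ} (ρ : Nat.Partition n) (m : ℕ) (hm : m ∈ ρ.parts) :
    Nat.Partition (n - m) where
  parts := ρ.parts.erase m
  parts_pos := fun hi => ρ.parts_pos (Multiset.mem_of_mem_erase hi)
  parts_sum := by
    have h := congrArg Multiset.sum (Multiset.cons_erase hm)
    rw [Multiset.sum_cons, ρ.parts_sum] at h
    omega

def consPart (n m : ℕ) (hm : 0 < m) {k : ℕ} (hk : m + k = n) (σ : Nat.Partition k) :
    Nat.Partition n where
  parts := m ::ₘ σ.parts
  parts_pos := fun hi => by
    rcases Multiset.mem_cons.mp hi with h | h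
    · exact h ▸ hm
    · exact σ.parts_pos h
  parts_sum := by rw [Multiset.sum_cons, σ.parts_sum, hk]

lemma recA (n : ℕ) :
    (n : RatFunc ℚ) * A n =
      ∑ m ∈ (range (n+1)).filter (fun m => Odd m),
        (2 * ((RatFunc.X : RatFunc ℚ) ^ m - 1)) * A (n - m) := by
  classical
  rw [A, mul_sum]
  have lhs : ∀ ρ ∈ Nat.Partition.odds n,
      (n : RatFunc ℚ) * W ρ
        = ∑ m ∈ ρ.parts.toFinset, ((m * ρ.parts.count m : ℕ) : RatFunc ℚ) * W ρ := by
    intro ρ _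
    have h0 := Finset.sum_multiset_map_count ρ.parts (fun x => x)
    rw [Multiset.map_id'] at h0
    simp only [smul_eq_mul, ρ.parts_sum] at h0
    have hn : ∑ m ∈ ρ.parts.toFinset, ((m * ρ.parts.count m : ℕ) : RatFunc ℚ)
        = (n : RatFunc ℚ) := by
      rw [← Nat.cast_sum]
      congr 1
      exact ((Finset.sum_congr rfl fun m _ => mul_comm _ _).trans h0.symm)
    rw [← sum_mul, hn]
  rw [Finset.sum_congr rfl lhs]
  have rhs_eq : ∑ m ∈ (range (n+1)).filter (fun m => Odd m),
        (2 * ((RatFunc.X : RatFunc ℚ) ^ m - 1)) * A (n - m)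
      = ∑ m ∈ (range (n+1)).filter (fun m => Odd m),
        ∑ σ ∈ Nat.Partition.odds (n - m), (2 * ((RatFunc.X : RatFunc ℚ) ^ m - 1)) * W σ :=
    Finset.sum_congr rfl fun m _ => by rw [A, mul_sum]
  rw [rhs_eq, Finset.sum_sigma', Finset.sum_sigma']
  refine Finset.sum_bij'
    (fun a ha => ⟨a.2, erasePart a.1 a.2 (Multiset.mem_toFinset.mp (Finset.mem_sigma.mp ha).2)⟩)
    (fun b hb => ⟨consPart n b.1
        ((Finset.mem_filter.mp (Finset.mem_sigma.mp hb).1).2.pos)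
        (by
          have := Finset.mem_range.mp (Finset.mem_filter.mp (Finset.mem_sigma.mp hb).1).1
          omega) b.2, b.1⟩)
    ?_ ?_ ?_ ?_ ?_
  · rintro ⟨ρ, m⟩ ha
    dsimp only
    obtain ⟨hρ, hmf⟩ := Finset.mem_sigma.mp ha
    have hm : m ∈ ρ.parts := Multiset.mem_toFinset.mp hmf
    refine Finset.mem_sigma.mpr ⟨Finset.mem_filter.mpr ⟨Finset.mem_range.mpr ?_, ?_⟩, ?_⟩
    · show m < n + 1
      have : m ≤ ρ.parts.sum := Multiset.single_le_sum (fun x _ => Nat.zero_le x) m hm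
      rw [ρ.parts_sum] at this
      omega
    · exact mem_odds_iff.mp hρ m hm
    · exact mem_odds_iff.mpr fun i hi =>
        mem_odds_iff.mp hρ i (Multiset.mem_of_mem_erase hi)
  · rintro ⟨m, σ⟩ hb
    dsimp only
    obtain ⟨hmf, hσ⟩ := Finset.mem_sigma.mp hb
    have hodd : Odd m := (Finset.mem_filter.mp hmf).2
    refine Finset.mem_sigma.mpr ⟨?_, ?_⟩
    · refine mem_odds_iff.mpr fun i hi => ?_
      rcases Multiset.mem_cons.mp hi with h | h
      · exact h ▸ hodd
      · exact mem_odds_iff.mp hσ i h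
    · exact Multiset.mem_toFinset.mpr (Multiset.mem_cons_self m σ.parts)
  · rintro ⟨ρ, m⟩ ha
    obtain ⟨hρ, hmf⟩ := Finset.mem_sigma.mp ha
    have hm : m ∈ ρ.parts := Multiset.mem_toFinset.mp hmf
    exact Sigma.ext (Nat.Partition.ext (Multiset.cons_erase hm)) HEq.rfl
  · rintro ⟨m, σ⟩ hb
    exact Sigma.ext rfl (heq_of_eq (Nat.Partition.ext (Multiset.erase_cons_head m σ.parts)))
  · rintro ⟨ρ, m⟩ ha
    obtain ⟨hρ, hmf⟩ := Finset.mem_sigma.mp ha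
    have hm : m ∈ ρ.parts := Multiset.mem_toFinset.mp hmf
    exact weight_rel (ρ.parts_pos hm) _ ρ (Multiset.cons_erase hm).symm


noncomputable def B : ℕ → RatFunc ℚ
  | 0 => 1
  | n+1 => 2 * (RatFunc.X - 1) * ((RatFunc.X ^ (n+1) - (-1) ^ (n+1)) / (RatFunc.X + 1))

lemma B_eq {r : ℕ} (hr : r ≠ 0) :
    B r = 2 * (RatFunc.X - 1) * (((RatFunc.X : RatFunc ℚ) ^ r - (-1) ^ r) / (RatFunc.X + 1)) := by
  cases r with
  | zero => exact absurd rfl hr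
  | succ n => rfl

open Polynomial in
lemma hX1 : (RatFunc.X + 1 : RatFunc ℚ) ≠ 0 := by
  have h : (RatFunc.X + 1 : RatFunc ℚ) = algebraMap ℚ[X] _ (Polynomial.X + 1) := by
    rw [map_add, map_one, RatFunc.algebraMap_X]
  rw [h]
  apply RatFunc.algebraMap_ne_zero
  rw [← Polynomial.C_1]
  exact Polynomial.X_add_C_ne_zero 1

lemma sum_filter_odd {M : Type*} [AddCommMonoid M] (N : ℕ) (f : ℕ → M) :
    ∑ m ∈ (range N).filter (fun m => Odd m), f m = ∑ j ∈ range (N/2), f (2*j+1) := by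
  refine Finset.sum_nbij' (fun m => m/2) (fun j => 2*j+1) ?_ ?_ ?_ ?_ ?_
  · intro a ha
    simp only [Finset.mem_filter, Finset.mem_range, Nat.odd_iff] at ha ⊢
    omega
  · intro a ha
    simp only [Finset.mem_filter, Finset.mem_range, Nat.odd_iff] at ha ⊢
    omega
  · intro a ha
    simp only [Finset.mem_filter, Finset.mem_range, Nat.odd_iff] at ha
    omega
  · intro a ha
    omega
  · intro a ha
    simp only [Finset.mem_filter, Finset.mem_range, Nat.odd_iff] at ha
    congr 1
    omega

lemma recB (n : ℕ) (hn : 1 ≤ n) :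
    (n : RatFunc ℚ) * B n
      = ∑ m ∈ (range (n+1)).filter (fun m => Odd m),
          (2 * ((RatFunc.X : RatFunc ℚ) ^ m - 1)) * B (n - m) := by
  rw [sum_filter_odd]
  set X := (RatFunc.X : RatFunc ℚ) with hXdef
  have h1 : X + 1 ≠ 0 := hX1
  have h1' : (1 : RatFunc ℚ) + X ≠ 0 := by rw [add_comm]; exact h1
  rcases n.even_or_odd with he | ho
  · -- n = k + k
    obtain ⟨k, hk⟩ := he
    subst hk
    have h2 : (k + k + 1)/2 = k := by omega
    rw [h2]
    have expand : ∀ j ∈ range k,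
        (2 * (X ^ (2*j+1) - 1)) * B (k + k - (2*j+1))
          = 4*(X-1)/(X+1)*(X^(k+k) - 1) + 4*(X-1)/(X+1)*((X^2)^j*X)
              - 4*(X-1)/(X+1)*(X^(k+k - (2*j+1))) := by
      intro j hj
      have hjk := Finset.mem_range.mp hj
      have hr0 : k + k - (2*j+1) ≠ 0 := by omega
      have hodd : Odd (k + k - (2*j+1)) := by
        rw [Nat.odd_iff]; omega
      have hpow : X ^ (2*j+1) * X ^ (k + k - (2*j+1)) = X^(k+k) := by
        rw [← pow_add]; congr 1; omega
      have hpj : (X^2)^j * X = X ^ (2*j+1) := by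
        rw [← pow_mul, ← pow_succ]
      rw [B_eq hr0, hodd.neg_one_pow, hpj]
      rw [← hXdef]
      generalize X ^ (k + k - (2*j+1)) = y at hpow ⊢
      generalize X ^ (k + k) = P at hpow ⊢
      generalize X ^ (2*j+1) = a at hpow ⊢
      field_simp
      linear_combination (4*(X-1)*(X+1) + 4*X*(1-X)) * hpow
    rw [Finset.sum_congr rfl expand]
    have s2 : ∑ j ∈ range k, X ^ (k + k - (2*j+1)) = ∑ j ∈ range k, (X^2)^j * X := by
      rw [← Finset.sum_range_reflect]
      refine Finset.sum_congr rfl fun j hj => ?_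
      have hjk := Finset.mem_range.mp hj
      rw [← pow_mul, ← pow_succ]
      congr 1
      omega
    rw [Finset.sum_sub_distrib, Finset.sum_add_distrib, Finset.sum_const, Finset.card_range,
      ← Finset.mul_sum, ← Finset.mul_sum, s2]
    have hk0 : k + k ≠ 0 := by omega
    rw [B_eq hk0, (Even.neg_one_pow ⟨k, rfl⟩ : ((-1 : RatFunc ℚ)) ^ (k+k) = 1)]
    rw [← hXdef]
    simp only [nsmul_eq_mul]
    push_cast
    field_simp
    ring
  · obtain ⟨k, hk⟩ := ho
    subst hk
    have h2 : (2*k+1+1)/2 = k+1 := by omega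
    rw [h2, Finset.sum_range_succ]
    have hlast : 2*k+1 - (2*k+1) = 0 := by omega
    rw [hlast]
    have hB0 : B 0 = 1 := rfl
    rw [hB0]
    have expand : ∀ j ∈ range k,
        (2 * (X ^ (2*j+1) - 1)) * B (2*k+1 - (2*j+1))
          = 4*(X-1)/(X+1)*(X^(2*k+1) + 1) - 4*(X-1)/(X+1)*((X^2)^j*X)
              - 4*(X-1)/(X+1)*(X^(2*k+1 - (2*j+1))) := by
      intro j hj
      have hjk := Finset.mem_range.mp hj
      have hr0 : 2*k+1 - (2*j+1) ≠ 0 := by omega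
      have heven : Even (2*k+1 - (2*j+1)) := by
        rw [Nat.even_iff]; omega
      have hpow : X ^ (2*j+1) * X ^ (2*k+1 - (2*j+1)) = X^(2*k+1) := by
        rw [← pow_add]; congr 1; omega
      have hpj : (X^2)^j * X = X ^ (2*j+1) := by
        rw [← pow_mul, ← pow_succ]
      rw [B_eq hr0, heven.neg_one_pow, hpj]
      rw [← hXdef]
      generalize X ^ (2*k+1 - (2*j+1)) = y at hpow ⊢
      generalize X ^ (2*k+1) = P at hpow ⊢
      generalize X ^ (2*j+1) = a at hpow ⊢
      field_simp
      linear_combination (4*(X-1)*(X+1) + 4*X*(1-X)) * hpow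
    rw [Finset.sum_congr rfl expand]
    have s2 : ∑ j ∈ range k, X ^ (2*k+1 - (2*j+1)) = ∑ j ∈ range k, (X^2)^j * X^2 := by
      rw [← Finset.sum_range_reflect]
      refine Finset.sum_congr rfl fun j hj => ?_
      have hjk := Finset.mem_range.mp hj
      rw [← pow_mul, ← pow_add]
      congr 1
      omega
    rw [Finset.sum_sub_distrib, Finset.sum_sub_distrib, Finset.sum_const, Finset.card_range,
      ← Finset.mul_sum, ← Finset.mul_sum, s2, ← Finset.sum_mul, ← Finset.sum_mul]
    have hg := geom_sum_mul (X^2) k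
    have hP : X ^ (2*k+1) = (X^2)^k * X := by rw [pow_succ, pow_mul]
    have hk0 : 2*k+1 ≠ 0 := by omega
    rw [B_eq hk0, (Odd.neg_one_pow ⟨k, rfl⟩ : ((-1 : RatFunc ℚ)) ^ (2*k+1) = -1)]
    rw [← hXdef, hP]
    simp only [nsmul_eq_mul]
    push_cast
    field_simp
    linear_combination (4*X) * hg


lemma A_zero : A 0 = 1 := by
  rw [A]
  have hsingle : Nat.Partition.odds 0 = {default} := by
    apply Finset.eq_singleton_iff_unique_mem.mpr
    constructor
    · exact mem_odds_iff.mpr (by simp)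
    · intro x _
      exact Subsingleton.elim x default
  rw [hsingle, Finset.sum_singleton, W]
  simp [zMul]

lemma A_eq_B : ∀ n, A n = B n := by
  intro n
  induction n using Nat.strong_induction_on with
  | _ n ih =>
    rcases eq_or_ne n 0 with h0 | h0
    · subst h0; exact A_zero
    · have hn : 1 ≤ n := Nat.one_le_iff_ne_zero.mpr h0
      have hcast : (n : RatFunc ℚ) ≠ 0 := Nat.cast_ne_zero.mpr h0
      apply mul_left_cancel₀ hcast
      rw [recA n, recB n hn]
      refine Finset.sum_congr rfl fun m hm => ?_
      have hodd : Odd m := (Finset.mem_filter.mp hm).2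
      have : n - m < n := by
        have := hodd.pos
        omega
      rw [ih (n - m) this]

/-- For `n ≥ 1`, in `ℚ(t)`:
`∑_{ρ ∈ OP_n} (-2)^{ℓ(ρ)} / z_ρ(t) = 2(t-1)(t^n - (-1)^n)/(t+1)`,
where `z_ρ(t) = z_ρ / ∏_j (1 - t^{ρ_j})`, i.e. `1/z_ρ(t) = ∏_j (1 - t^{ρ_j}) / z_ρ`. -/
theorem sum_over_odd_partitions_g (n : ℕ) (hn : 1 ≤ n) :
    ∑ ρ ∈ Nat.Partition.odds n,
      ((-2 : RatFunc ℚ) ^ (Multiset.card ρ.parts) *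
        (ρ.parts.map fun j => 1 - (RatFunc.X : RatFunc ℚ) ^ j).prod / (zPartition ρ : RatFunc ℚ)) =
    2 * (RatFunc.X - 1) * ((RatFunc.X ^ n - (-1) ^ n) / (RatFunc.X + 1)) := by
  have hA : ∑ ρ ∈ Nat.Partition.odds n,
      ((-2 : RatFunc ℚ) ^ (Multiset.card ρ.parts) *
        (ρ.parts.map fun j => 1 - (RatFunc.X : RatFunc ℚ) ^ j).prod / (zPartition ρ : RatFunc ℚ))
      = A n := by
    rw [A]
    exact Finset.sum_congr rfl fun ρ _ => rfl
  rw [hA, A_eq_B n, B_eq (Nat.one_le_iff_ne_zero.mp hn)]
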